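/- Let 𝒜 ∈ ℝ^{n₁×⋯×n_d} be nonzero. The output (x₁⁰,…,x_d⁰) of Algorithm D (SVD-free: at each stage select the largest-norm row of the current unfolding, multiply, truncate, normalize) satisfies 𝒜(x₁⁰,…,x_d⁰) ≥ √(∏ⱼ rⱼ/∏ⱼ nⱼ) · ‖𝒜‖_F / √(∏_{j=1}^{d−1} n_j) ≥ √(∏ⱼ rⱼ/∏ⱼ nⱼ) · v_opt / √(∏_{j=1}^{d−1} n_j). -/

import Mathlib

open Finset

noncomputable def enorm' {ι : Type*} [Fintype ι] (x : ι → ℝ) : ℝ :=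
  Real.sqrt (∑ i, x i ^ 2)

def dot {ι : Type*} [Fintype ι] (x y : ι → ℝ) : ℝ := ∑ i, x i * y i

noncomputable def l0 {ι : Type*} [Fintype ι] (x : ι → ℝ) : ℕ :=
  (Finset.univ.filter fun i => x i ≠ 0).card

def IsTrunc {ι : Type*} [Fintype ι] [DecidableEq ι] (a : ι → ℝ) (r : ℕ) (ar : ι → ℝ) : Prop :=
  ∃ S : Finset ι, S.card = r ∧ (∀ i ∈ S, ar i = a i) ∧ (∀ i ∉ S, ar i = 0) ∧
    ∀ i ∈ S, ∀ j ∉ S, |a j| ≤ |a i|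

noncomputable def lmax {m n' : Type*} [Fintype m] [Fintype n'] (A : Matrix m n' ℝ) : ℝ :=
  sSup {c | ∃ x : n' → ℝ, enorm' x = 1 ∧ c = enorm' (A.mulVec x)}

noncomputable def fnorm {m n' : Type*} [Fintype m] [Fintype n'] (A : Matrix m n' ℝ) : ℝ :=
  Real.sqrt (∑ i, ∑ j, A i j ^ 2)

def tri {n1 n2 n3 : ℕ} (A : Fin n1 → Fin n2 → Fin n3 → ℝ)
    (x : Fin n1 → ℝ) (y : Fin n2 → ℝ) (z : Fin n3 → ℝ) : ℝ :=
  ∑ i, ∑ j, ∑ k, A i j k * x i * y j * z k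

def mlin {d : ℕ} {n : Fin d → ℕ} (A : (∀ j, Fin (n j)) → ℝ)
    (x : ∀ j, Fin (n j) → ℝ) : ℝ :=
  ∑ i, A i * ∏ j, x j (i j)

/-- Unfolding A_j of Algorithm D (cf. Remark 3.1): rows indexed by mode j,
columns by the modes k > j, with the modes k < j contracted against x_k. -/
def unf {d : ℕ} {n : Fin d → ℕ} (A : (∀ k, Fin (n k)) → ℝ)
    (x : ∀ k, Fin (n k) → ℝ) (j : Fin d) :
    Matrix (Fin (n j)) (∀ k : {k : Fin d // j < k}, Fin (n k.1)) ℝ :=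
  fun t q => ∑ i : ∀ k, Fin (n k), A i * ∏ k,
    (if k < j then x k (i k)
     else if h : j < k then (if i k = q ⟨k, h⟩ then (1 : ℝ) else 0)
     else (if (⟨k, i k⟩ : Σ m : Fin d, Fin (n m)) = ⟨j, t⟩ then 1 else 0))

/-- Contraction of 𝒜 with x_k on every mode except j; at the final stage
j = d this equals A_{d-1}ᵀ x_{d-1}⁰. -/
def cvec {d : ℕ} {n : Fin d → ℕ} (A : (∀ k, Fin (n k)) → ℝ)
    (x : ∀ k, Fin (n k) → ℝ) (j : Fin d) : Fin (n j) → ℝ :=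
  fun t => ∑ i : ∀ k, Fin (n k), A i * ∏ k,
    (if k = j then (if (⟨k, i k⟩ : Σ m : Fin d, Fin (n m)) = ⟨j, t⟩ then (1 : ℝ) else 0)
     else x k (i k))

/-! Write `F_j` for the Frobenius norm of the unfolding `A_j`. One stage of Algorithm D loses at
most a factor `√r_j / n_j`: the largest row of `A_j` carries at least `F_j² / n_j` of the mass and
reappears as the entry `k̃` of `x̄_j = A_j w_j`; truncation keeps an `r_j / n_j` share of `‖x̄_j‖²`;
and, with `t_j` the truncation, `‖t_j‖ = ⟪x̄_j, x_j⁰⟫ = ⟪w_j, A_jᵀ x_j⁰⟫ ≤ ‖A_jᵀ x_j⁰‖ = F_{j+1}`.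
As `A_1` is a reshape of `𝒜`, the stages chain to `F_d ≥ ∏_{j<d} (√r_j / n_j) ‖𝒜‖_F`, the last
truncation costs `√(r_d / n_d)`, and `𝒜(x₁⁰, …, x_d⁰) = ‖t_d‖`. For unit `y_j`,
`𝒜(y₁, …, y_d) ≤ ‖𝒜‖_F` by Cauchy–Schwarz against the unit tensor `y₁ ⊗ ⋯ ⊗ y_d`. -/

open Matrix

section Vectors

variable {ι : Type*} [Fintype ι]

theorem dot_eq_dotProduct (u v : ι → ℝ) : dot u v = u ⬝ᵥ v := rfl

theorem dot_comm (u v : ι → ℝ) : dot u v = dot v u := dotProduct_comm u v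

theorem enorm'_nonneg (v : ι → ℝ) : 0 ≤ enorm' v := Real.sqrt_nonneg _

theorem enorm'_sq (v : ι → ℝ) : enorm' v ^ 2 = ∑ i, v i ^ 2 :=
  Real.sq_sqrt (sum_nonneg fun i _ => sq_nonneg (v i))

theorem le_enorm' (v : ι → ℝ) (i : ι) : v i ≤ enorm' v :=
  Real.le_sqrt_of_sq_le (single_le_sum (fun i _ => sq_nonneg (v i)) (mem_univ i))

theorem dot_le_enorm'_mul_enorm' (u v : ι → ℝ) : dot u v ≤ enorm' u * enorm' v :=
  Real.sum_mul_le_sqrt_mul_sqrt _ _ _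

theorem enorm'_div (v : ι → ℝ) (c : ℝ) : enorm' (fun i => v i / c) = enorm' v / |c| := by
  simp only [enorm', div_pow, ← sum_div, Real.sqrt_div' _ (sq_nonneg c), Real.sqrt_sq_eq_abs]

theorem enorm'_div_enorm'_le_one (v : ι → ℝ) : enorm' (fun i => v i / enorm' v) ≤ 1 := by
  rw [enorm'_div, abs_of_nonneg (enorm'_nonneg v)]
  exact div_self_le_one _

theorem dot_div (u v : ι → ℝ) (c : ℝ) : dot u (fun i => v i / c) = dot u v / c := by
  simp only [dot, mul_div_assoc', sum_div]

theorem dot_self (v : ι → ℝ) : dot v v = enorm' v ^ 2 := by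
  simp only [enorm'_sq, dot, ← sq]

theorem dot_div_enorm'_self (v : ι → ℝ) : dot v (fun i => v i / enorm' v) = enorm' v := by
  rw [dot_div, dot_self, sq, mul_self_div_self]

theorem enorm'_tprod {d : ℕ} {n : Fin d → ℕ} (y : ∀ j, Fin (n j) → ℝ) :
    enorm' (fun i : ∀ j, Fin (n j) => ∏ j, y j (i j)) = ∏ j, enorm' (y j) := by
  simp only [enorm', ← Real.sqrt_prod _ fun j _ => sum_nonneg fun s _ => sq_nonneg (y j s),
    ← prod_pow, Fintype.prod_sum]

end Vectors

section Truncation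

variable {ι : Type*} [Fintype ι] [DecidableEq ι]

theorem card_mul_sum_sq_le_of_forall_abs_le (a : ι → ℝ) (S : Finset ι)
    (hS : ∀ i ∈ S, ∀ j ∉ S, |a j| ≤ |a i|) :
    #S * ∑ i, a i ^ 2 ≤ Fintype.card ι * ∑ i ∈ S, a i ^ 2 := by
  have hout : #S * ∑ j ∈ Sᶜ, a j ^ 2 ≤ #Sᶜ * ∑ i ∈ S, a i ^ 2 := by
    simp only [← nsmul_eq_mul, ← sum_const, smul_sum]
    rw [sum_comm]
    exact sum_le_sum fun i hi => sum_le_sum fun j hj => sq_le_sq.2 (hS i hi j (mem_compl.1 hj))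
  have hcard : (Fintype.card ι : ℝ) = #S + #Sᶜ := by
    rw [← Nat.cast_add, card_add_card_compl]
  rw [← sum_add_sum_compl S, hcard]
  linarith

variable {a t : ι → ℝ} {r : ℕ}

theorem IsTrunc.dot_eq (h : IsTrunc a r t) : dot a t = enorm' t ^ 2 := by
  obtain ⟨S, -, hS, hSc, -⟩ := h
  rw [← dot_self]
  refine sum_congr rfl fun i _ => ?_
  by_cases hi : i ∈ S
  · rw [hS i hi]
  · simp [hSc i hi]

theorem IsTrunc.dot_div_enorm' (h : IsTrunc a r t) :
    dot a (fun i => t i / enorm' t) = enorm' t := by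
  rw [dot_div, h.dot_eq, sq, mul_self_div_self]

theorem IsTrunc.sqrt_mul_enorm'_le (h : IsTrunc a r t) :
    √r * enorm' a ≤ √(Fintype.card ι) * enorm' t := by
  obtain ⟨S, rfl, hS, hSc, hmax⟩ := h
  have ht : ∑ i, t i ^ 2 = ∑ i ∈ S, a i ^ 2 := by
    rw [← sum_subset (subset_univ S) fun i _ hi => by simp [hSc i hi]]
    exact sum_congr rfl fun i hi => by rw [hS i hi]
  simp only [enorm', ← Real.sqrt_mul (Nat.cast_nonneg _), ht]
  exact Real.sqrt_le_sqrt (card_mul_sum_sq_le_of_forall_abs_le a S hmax)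

end Truncation

section Matrices

variable {m κ : Type*} [Fintype m] [Fintype κ]

theorem fnorm_le_sqrt_card_mul_enorm' (M : Matrix m κ ℝ) {k : m}
    (hk : ∀ s, enorm' (M s) ≤ enorm' (M k)) :
    fnorm M ≤ √(Fintype.card m) * enorm' (M k) := by
  rw [fnorm, ← Real.sqrt_sq (enorm'_nonneg (M k)), ← Real.sqrt_mul (Nat.cast_nonneg _),
    ← nsmul_eq_mul, ← card_univ, ← sum_const]
  refine Real.sqrt_le_sqrt (sum_le_sum fun s _ => ?_)
  rw [← enorm'_sq]
  exact pow_le_pow_left₀ (enorm'_nonneg _) (hk s) 2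

theorem sqrt_mul_fnorm_le_card_mul_enorm'_vecMul [DecidableEq m] (M : Matrix m κ ℝ) {k : m}
    (hk : ∀ s, enorm' (M s) ≤ enorm' (M k)) {r : ℕ} {t : m → ℝ}
    (ht : IsTrunc (M *ᵥ fun q => M k q / enorm' (M k)) r t) :
    √r * fnorm M ≤ Fintype.card m * enorm' ((fun s => t s / enorm' t) ᵥ* M) := by
  set w : κ → ℝ := fun q => M k q / enorm' (M k)
  set x : m → ℝ := fun s => t s / enorm' t
  have hrow : enorm' (M k) ≤ enorm' (M *ᵥ w) := by
    have : (M *ᵥ w) k = enorm' (M k) := dot_div_enorm'_self (M k)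
    exact this ▸ le_enorm' _ k
  have hproj : enorm' t ≤ enorm' (x ᵥ* M) :=
    calc enorm' t = dot (M *ᵥ w) x := ht.dot_div_enorm'.symm
      _ = dot w (x ᵥ* M) := by
        rw [dot_eq_dotProduct, dot_eq_dotProduct, dotProduct_comm, dotProduct_mulVec,
          dotProduct_comm]
      _ ≤ enorm' w * enorm' (x ᵥ* M) := dot_le_enorm'_mul_enorm' _ _
      _ ≤ enorm' (x ᵥ* M) :=
        mul_le_of_le_one_left (enorm'_nonneg _) (enorm'_div_enorm'_le_one _)
  have hcard : √(Fintype.card m) * √(Fintype.card m) = Fintype.card m :=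
    Real.mul_self_sqrt (Nat.cast_nonneg _)
  calc √r * fnorm M ≤ √r * (√(Fintype.card m) * enorm' (M k)) := by
        gcongr; exact fnorm_le_sqrt_card_mul_enorm' M hk
    _ ≤ √(Fintype.card m) * (√r * enorm' (M *ᵥ w)) := by
        rw [mul_left_comm]; gcongr
    _ ≤ √(Fintype.card m) * (√(Fintype.card m) * enorm' t) :=
        mul_le_mul_of_nonneg_left ht.sqrt_mul_enorm'_le (Real.sqrt_nonneg _)
    _ ≤ Fintype.card m * enorm' (x ᵥ* M) := by
        rw [← mul_assoc, hcard]; gcongr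

theorem fnorm_eq_enorm'_of_equiv {γ : Type*} [Fintype γ] (M : Matrix m κ ℝ) (v : γ → ℝ)
    (e : γ ≃ m × κ) (h : ∀ s q, M s q = v (e.symm (s, q))) : fnorm M = enorm' v := by
  rw [fnorm, enorm', ← e.symm.sum_comp, Fintype.sum_prod_type]
  simp only [h]

end Matrices

section OptionEquiv

variable {α : Type*} [LinearOrder α]

def equivOptionOfIsBot {a : α} (h : IsBot a) : α ≃ Option {k // a < k} where
  toFun k := if hk : a < k then some ⟨k, hk⟩ else none
  invFun o := o.elim a Subtype.val
  left_inv k := by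
    by_cases hk : a < k
    · simp [hk]
    · simp [le_antisymm (not_lt.1 hk) (h k)]
  right_inv o := by
    cases o with
    | none => simp
    | some k => simp [k.2]

def equivOptionOfCovBy {a b : α} (h : a ⋖ b) : {k // a < k} ≃ Option {k // b < k} where
  toFun k := if hk : b < k.1 then some ⟨k.1, hk⟩ else none
  invFun o := o.elim ⟨b, h.lt⟩ fun k => ⟨k.1, h.lt.trans k.2⟩
  left_inv k := by
    by_cases hk : b < k.1
    · simp [hk]
    · simp [Subtype.ext_iff, le_antisymm (not_lt.1 hk) (h.ge_of_gt k.2)]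
  right_inv o := by
    cases o with
    | none => simp
    | some k => simp [k.2]

end OptionEquiv

section Tensor

variable {d : ℕ} {n : Fin d → ℕ} (A : (∀ k, Fin (n k)) → ℝ)

theorem mlin_update_eq_sum (y : ∀ k, Fin (n k) → ℝ) (j : Fin d) (c : Fin (n j) → ℝ) :
    mlin A (Function.update y j c) =
      ∑ s, c s * mlin A (Function.update y j (Pi.single s 1)) := by
  have hfactor : ∀ (v : Fin (n j) → ℝ) (i : ∀ k, Fin (n k)),
      ∏ k, Function.update y j v k (i k) = v (i j) * ∏ k ∈ univ.erase j, y k (i k) := by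
    intro v i
    rw [← mul_prod_erase univ _ (mem_univ j), Function.update_self]
    congr 1
    exact prod_congr rfl fun k hk => by rw [Function.update_of_ne (ne_of_mem_erase hk)]
  simp only [mlin, hfactor, mul_sum]
  rw [sum_comm]
  refine sum_congr rfl fun i _ => ?_
  rw [Fintype.sum_eq_single (i j) fun s hs => by simp [Ne.symm hs]]
  simp only [Pi.single_eq_same]
  ring

theorem mlin_pi_single (e : ∀ k, Fin (n k)) : mlin A (fun k => Pi.single (e k) 1) = A e := by
  rw [mlin, Fintype.sum_eq_single e fun i hi => ?_]
  · simp
  · obtain ⟨k, hk⟩ := Function.ne_iff.1 hi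
    rw [prod_eq_zero (mem_univ k) (Pi.single_eq_of_ne hk 1), mul_zero]

theorem mlin_le_enorm'_mul_prod (y : ∀ k, Fin (n k) → ℝ) :
    mlin A y ≤ enorm' A * ∏ j, enorm' (y j) :=
  enorm'_tprod y ▸ dot_le_enorm'_mul_enorm' A _

variable (x : ∀ k, Fin (n k) → ℝ)

theorem cvec_eq_mlin_update (j : Fin d) (s : Fin (n j)) :
    cvec A x j s = mlin A (Function.update x j (Pi.single s 1)) := by
  unfold cvec mlin
  congr! with i _ k
  by_cases hk : k = j
  · subst hk
    simp [Pi.single_apply]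
  · simp [hk]

theorem mlin_eq_dot_cvec (j : Fin d) : mlin A x = dot (x j) (cvec A x j) := by
  conv_lhs => rw [← Function.update_eq_self j x, mlin_update_eq_sum]
  simp only [dot, cvec_eq_mlin_update]

def piSplitOfIsBot {j : Fin d} (h : IsBot j) :
    (∀ k, Fin (n k)) ≃ Fin (n j) × ∀ k : {k // j < k}, Fin (n k) :=
  (Equiv.piCongrLeft' _ (equivOptionOfIsBot h)).trans Equiv.piOptionEquivProd

def piSplitOfCovBy {j js : Fin d} (h : j ⋖ js) :
    (∀ k : {k // j < k}, Fin (n k)) ≃ Fin (n js) × ∀ k : {k // js < k}, Fin (n k) :=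
  (Equiv.piCongrLeft' _ (equivOptionOfCovBy h)).trans Equiv.piOptionEquivProd

/-- `unf A x j t q` is `mlin A` at these factors, so the reshape identities between consecutive
unfoldings reduce to multilinearity, `mlin_update_eq_sum`. -/
def unfSlot (j : Fin d) (t : Fin (n j)) (q : ∀ k : {k // j < k}, Fin (n k)) :
    ∀ k, Fin (n k) → ℝ := fun k s =>
  if k < j then x k s
  else if h : j < k then (if s = q ⟨k, h⟩ then 1 else 0)
  else (if (⟨k, s⟩ : Σ m : Fin d, Fin (n m)) = ⟨j, t⟩ then 1 else 0)

theorem unf_eq_mlin_unfSlot (j : Fin d) (t : Fin (n j)) (q : ∀ k : {k // j < k}, Fin (n k)) :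
    unf A x j t q = mlin A (unfSlot x j t q) := rfl

theorem unfSlot_of_isBot {j : Fin d} (h : IsBot j) (t : Fin (n j))
    (q : ∀ k : {k // j < k}, Fin (n k)) :
    unfSlot x j t q = fun k => Pi.single ((piSplitOfIsBot h).symm (t, q) k) 1 := by
  set i := (piSplitOfIsBot h).symm (t, q)
  have hi : piSplitOfIsBot h i = (t, q) := Equiv.apply_symm_apply _ _
  have hij : i j = t := congrArg Prod.fst hi
  have hik : ∀ k (hk : j < k), i k = q ⟨k, hk⟩ :=
    fun k hk => congrFun (congrArg Prod.snd hi) ⟨k, hk⟩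
  funext k s
  rcases (h k).eq_or_lt with rfl | hjk
  · simp [unfSlot, Pi.single_apply, hij]
  · simp [unfSlot, Pi.single_apply, hjk, not_lt_of_gt hjk, hik k hjk]

theorem unf_of_isBot {j : Fin d} (h : IsBot j) (t : Fin (n j))
    (q : ∀ k : {k // j < k}, Fin (n k)) :
    unf A x j t q = A ((piSplitOfIsBot h).symm (t, q)) := by
  rw [unf_eq_mlin_unfSlot, unfSlot_of_isBot x h, mlin_pi_single]

theorem fnorm_unf_of_isBot {j : Fin d} (h : IsBot j) : fnorm (unf A x j) = enorm' A :=
  fnorm_eq_enorm'_of_equiv _ A (piSplitOfIsBot h) (unf_of_isBot A x h)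

theorem unfSlot_of_covBy {j js : Fin d} (h : j ⋖ js) (s : Fin (n j)) (t : Fin (n js))
    (q : ∀ k : {k // js < k}, Fin (n k)) :
    unfSlot x j s ((piSplitOfCovBy h).symm (t, q)) =
      Function.update (unfSlot x js t q) j (Pi.single s 1) := by
  set g := (piSplitOfCovBy h).symm (t, q)
  have hg : piSplitOfCovBy h g = (t, q) := Equiv.apply_symm_apply _ _
  have hgjs : g ⟨js, h.lt⟩ = t := congrArg Prod.fst hg
  have hgk : ∀ k (hk : js < k), g ⟨k, h.lt.trans hk⟩ = q ⟨k, hk⟩ :=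
    fun k hk => congrFun (congrArg Prod.snd hg) ⟨k, hk⟩
  funext k u
  rcases lt_trichotomy k j with hkj | rfl | hjk
  · simp [unfSlot, hkj, hkj.ne, hkj.trans h.lt]
  · simp [unfSlot, Pi.single_apply]
  · rcases (h.ge_of_gt hjk).eq_or_lt with rfl | hsk
    · simp [unfSlot, hjk, hjk.ne', not_lt_of_gt hjk, hgjs]
    · simp [unfSlot, hjk, hjk.ne', not_lt_of_gt hjk, hsk, not_lt_of_gt hsk, hgk k hsk]

theorem unf_of_covBy {j js : Fin d} (h : j ⋖ js) (t : Fin (n js))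
    (q : ∀ k : {k // js < k}, Fin (n k)) :
    unf A x js t q = (x j ᵥ* unf A x j) ((piSplitOfCovBy h).symm (t, q)) := by
  have hj : unfSlot x js t q j = x j := funext fun s => if_pos h.lt
  rw [unf_eq_mlin_unfSlot, ← Function.update_eq_self j (unfSlot x js t q), hj,
    mlin_update_eq_sum]
  simp only [vecMul, dotProduct, unf_eq_mlin_unfSlot, unfSlot_of_covBy x h]

theorem fnorm_unf_of_covBy {j js : Fin d} (h : j ⋖ js) :
    fnorm (unf A x js) = enorm' (x j ᵥ* unf A x j) :=
  fnorm_eq_enorm'_of_equiv _ _ (piSplitOfCovBy h) (unf_of_covBy A x h)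

theorem unf_of_isTop {j : Fin d} (h : IsTop j) (t : Fin (n j))
    (q : ∀ k : {k // j < k}, Fin (n k)) : unf A x j t q = cvec A x j t := by
  rw [unf_eq_mlin_unfSlot, cvec_eq_mlin_update]
  congr 1
  funext k s
  rcases (h k).eq_or_lt with rfl | hkj
  · simp [unfSlot, Pi.single_apply]
  · simp [unfSlot, hkj, hkj.ne]

theorem fnorm_unf_of_isTop {j : Fin d} (h : IsTop j) :
    fnorm (unf A x j) = enorm' (cvec A x j) :=
  have : IsEmpty {k // j < k} := ⟨fun k => not_lt_of_ge (h k.1) k.2⟩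
  fnorm_eq_enorm'_of_equiv _ _ (Equiv.prodUnique _ _).symm fun t q => unf_of_isTop A x h t q

end Tensor

theorem Fin.castSucc_covBy_succ {D : ℕ} (i : Fin D) : i.castSucc ⋖ i.succ :=
  ⟨i.castSucc_lt_succ, fun k h₁ h₂ => by
    simp only [Fin.lt_def, Fin.val_castSucc, Fin.val_succ] at h₁ h₂
    omega⟩

theorem Fin.prod_mul_le_prod_mul_of_forall_mul_le {D : ℕ} (F : Fin (D + 1) → ℝ)
    (a b : Fin D → ℝ) (ha : ∀ i, 0 ≤ a i) (hb : ∀ i, 0 ≤ b i)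
    (h : ∀ i, a i * F i.castSucc ≤ b i * F i.succ) :
    (∏ i, a i) * F 0 ≤ (∏ i, b i) * F (Fin.last D) := by
  induction D with
  | zero => simp
  | succ D ih =>
    have htail := ih (fun i => F i.succ) (fun i => a i.succ) (fun i => b i.succ)
      (fun i => ha _) (fun i => hb _) (fun i => h i.succ)
    rw [Fin.prod_univ_succ, Fin.prod_univ_succ, ← Fin.succ_last]
    calc a 0 * (∏ i : Fin D, a i.succ) * F 0
        = (∏ i : Fin D, a i.succ) * (a 0 * F (castSucc 0)) := by simp only [castSucc_zero]; ring
      _ ≤ (∏ i : Fin D, a i.succ) * (b 0 * F (succ 0)) :=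
        mul_le_mul_of_nonneg_left (h 0) (prod_nonneg fun i _ => ha _)
      _ = b 0 * ((∏ i : Fin D, a i.succ) * F (succ 0)) := by ring
      _ ≤ b 0 * ((∏ i : Fin D, b i.succ) * F (last D).succ) :=
        mul_le_mul_of_nonneg_left htail (hb 0)
      _ = _ := by ring

theorem sqrt_prod_div_mul_div_sqrt_le {D : ℕ} {r n : Fin (D + 1) → ℕ} {a b c : ℝ}
    (hc : 0 ≤ c) (hab : (∏ i : Fin D, √(r i.castSucc)) * a ≤ (∏ i : Fin D, (n i.castSucc : ℝ)) * b)
    (hbc : √(r (Fin.last D)) * b ≤ √(n (Fin.last D)) * c) :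
    √((∏ j, (r j : ℝ)) / ∏ j, (n j : ℝ)) * (a / √(∏ j ∈ univ.erase (Fin.last D), (n j : ℝ)))
      ≤ c := by
  set N := ∏ i : Fin D, (n i.castSucc : ℝ)
  have hN : 0 ≤ N := prod_nonneg fun i _ => Nat.cast_nonneg _
  have herase : ∏ j ∈ univ.erase (Fin.last D), (n j : ℝ) = N := by
    rw [← compl_singleton, ← Fin.image_castSucc,
      prod_image fun i _ j _ h => Fin.castSucc_injective _ h]
  rw [herase, Real.sqrt_div' _ (prod_nonneg fun j _ => Nat.cast_nonneg _), Fin.prod_univ_castSucc,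
    Fin.prod_univ_castSucc, Real.sqrt_mul hN,
    Real.sqrt_mul (prod_nonneg fun i _ => Nat.cast_nonneg _),
    Real.sqrt_prod _ fun i _ => Nat.cast_nonneg _, div_mul_div_comm]
  refine div_le_of_le_mul₀ (by positivity) hc ?_
  calc (∏ i : Fin D, √(r i.castSucc)) * √(r (Fin.last D)) * a
      = √(r (Fin.last D)) * ((∏ i : Fin D, √(r i.castSucc)) * a) := by ring
    _ ≤ √(r (Fin.last D)) * (N * b) := mul_le_mul_of_nonneg_left hab (Real.sqrt_nonneg _)
    _ = N * (√(r (Fin.last D)) * b) := by ring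
    _ ≤ N * (√(n (Fin.last D)) * c) := mul_le_mul_of_nonneg_left hbc hN
    _ = c * (√N * √(n (Fin.last D)) * √N) := by
      rw [mul_right_comm √N, Real.mul_self_sqrt hN]; ring

theorem stmt_17_general {d : ℕ} {n : Fin d → ℕ}
    (A : (∀ k, Fin (n k)) → ℝ)
    (r : Fin d → ℕ)
    (last : Fin d) (hlast : (last : ℕ) = d - 1)
    (x xb : ∀ j, Fin (n j) → ℝ) (t : ∀ j, Fin (n j) → ℝ)
    (kt : ∀ j, Fin (n j))
    (w : ∀ j, (∀ k : {k : Fin d // j < k}, Fin (n k.1)) → ℝ)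
    -- steps 1-2: for j = 1,…,d-1, select the largest-norm row of A_j,
    -- normalize it to w_j, set x̄_j = A_j w_j and x_j⁰ its normalized
    -- r_j-truncation
    (hstep : ∀ j, j ≠ last →
      (∀ s, enorm' (unf A x j s) ≤ enorm' (unf A x j (kt j))) ∧
      w j = (fun q => unf A x j (kt j) q / enorm' (unf A x j (kt j))) ∧
      xb j = (unf A x j).mulVec (w j) ∧
      IsTrunc (xb j) (r j) (t j) ∧ x j = fun s => t j s / enorm' (t j))
    -- step 3: x_d⁰ is the normalized r_d-truncation of A_{d-1}ᵀ x_{d-1}⁰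
    (hlaststep : IsTrunc (cvec A x last) (r last) (t last) ∧
      x last = fun s => t last s / enorm' (t last)) :
    mlin A x ≥
        Real.sqrt ((∏ j, (r j : ℝ)) / ∏ j, (n j : ℝ)) *
          (enorm' A / Real.sqrt (∏ j ∈ Finset.univ.erase last, (n j : ℝ))) ∧
      ∀ y : ∀ j, Fin (n j) → ℝ, (∀ j, enorm' (y j) = 1 ∧ l0 (y j) ≤ r j) →
        Real.sqrt ((∏ j, (r j : ℝ)) / ∏ j, (n j : ℝ)) *
          (mlin A y / Real.sqrt (∏ j ∈ Finset.univ.erase last, (n j : ℝ))) ≤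
          mlin A x := by
  obtain ⟨D, rfl⟩ : ∃ D, d = D + 1 := ⟨last, by have := last.isLt; omega⟩
  obtain rfl : last = Fin.last D := Fin.ext (by simp [hlast])
  have hchain (i : Fin D) : √(r i.castSucc) * fnorm (unf A x i.castSucc) ≤
      n i.castSucc * fnorm (unf A x i.succ) := by
    obtain ⟨hk, hw, hxb, ht, hx⟩ := hstep i.castSucc (Fin.castSucc_ne_last i)
    rw [fnorm_unf_of_covBy A x (Fin.castSucc_covBy_succ i), hx]
    simpa using sqrt_mul_fnorm_le_card_mul_enorm'_vecMul _ hk (hw ▸ hxb ▸ ht)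
  obtain ⟨ht, hx⟩ := hlaststep
  have hmlin : mlin A x = enorm' (t (Fin.last D)) := by
    rw [mlin_eq_dot_cvec A x (Fin.last D), dot_comm, hx, ht.dot_div_enorm']
  have hfinal : √(r (Fin.last D)) * fnorm (unf A x (Fin.last D)) ≤
      √(n (Fin.last D)) * mlin A x := by
    rw [fnorm_unf_of_isTop A x Fin.le_last, hmlin]
    simpa using ht.sqrt_mul_enorm'_le
  have hprod := Fin.prod_mul_le_prod_mul_of_forall_mul_le (fun j => fnorm (unf A x j)) _ _
    (fun i => Real.sqrt_nonneg _) (fun i => Nat.cast_nonneg _) hchain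
  rw [fnorm_unf_of_isBot A x Fin.zero_le] at hprod
  have hmain := sqrt_prod_div_mul_div_sqrt_le (hmlin ▸ enorm'_nonneg _) hprod hfinal
  refine ⟨hmain, fun y hy => le_trans ?_ hmain⟩
  have hAy : mlin A y ≤ enorm' A := by simpa [hy] using mlin_le_enorm'_mul_prod A y
  gcongr

/-- Theorem 3.6: approximation bound of Algorithm D (SVD-free: at each stage
select the largest-norm row of the current unfolding, multiply, truncate,
normalize). -/
theorem stmt_17 {d : ℕ} {n : Fin d → ℕ} (hd : 3 ≤ d)
    (A : (∀ k, Fin (n k)) → ℝ) (hA : A ≠ 0)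
    (r : Fin d → ℕ) (hr : ∀ j, 1 ≤ r j ∧ r j ≤ n j)
    (last : Fin d) (hlast : (last : ℕ) = d - 1)
    (x xb : ∀ j, Fin (n j) → ℝ) (t : ∀ j, Fin (n j) → ℝ)
    (kt : ∀ j, Fin (n j))
    (w : ∀ j, (∀ k : {k : Fin d // j < k}, Fin (n k.1)) → ℝ)
    -- steps 1-2: for j = 1,…,d-1, select the largest-norm row of A_j,
    -- normalize it to w_j, set x̄_j = A_j w_j and x_j⁰ its normalized
    -- r_j-truncation
    (hstep : ∀ j, j ≠ last →
      (∀ s, enorm' (unf A x j s) ≤ enorm' (unf A x j (kt j))) ∧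
      w j = (fun q => unf A x j (kt j) q / enorm' (unf A x j (kt j))) ∧
      xb j = (unf A x j).mulVec (w j) ∧
      IsTrunc (xb j) (r j) (t j) ∧ x j = fun s => t j s / enorm' (t j))
    -- step 3: x_d⁰ is the normalized r_d-truncation of A_{d-1}ᵀ x_{d-1}⁰
    (hlaststep : IsTrunc (cvec A x last) (r last) (t last) ∧
      x last = fun s => t last s / enorm' (t last)) :
    mlin A x ≥
        Real.sqrt ((∏ j, (r j : ℝ)) / ∏ j, (n j : ℝ)) *
          (enorm' A / Real.sqrt (∏ j ∈ Finset.univ.erase last, (n j : ℝ))) ∧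
      ∀ y : ∀ j, Fin (n j) → ℝ, (∀ j, enorm' (y j) = 1 ∧ l0 (y j) ≤ r j) →
        Real.sqrt ((∏ j, (r j : ℝ)) / ∏ j, (n j : ℝ)) *
          (mlin A y / Real.sqrt (∏ j ∈ Finset.univ.erase last, (n j : ℝ))) ≤
          mlin A x :=
  stmt_17_general A r last hlast x xb t kt w hstep hlaststep
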